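/- arXiv:2310.03422 — 2 statements merged into one kernel-verified Lean document; each statement's English description precedes it below -/
import Mathlib

section
/- Let (X,F) be a nonautonomous system generated by a commutative family of homeomorphisms. If x is almost periodic, then every point of the orbital hull O_H(x) is almost periodic. -/
open Metric Filter

/-- Forward time maps: `posComp f n = f n ∘ ⋯ ∘ f 1`. -/
def posComp {X : Type*} [TopologicalSpace X] (f : ℕ → X ≃ₜ X) : ℕ → X → X
  | 0 => id
  | n + 1 => (f (n + 1)) ∘ posComp f n

/-- Backward time maps: `negComp f n = f 1⁻¹ ∘ ⋯ ∘ f n⁻¹`. -/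
def negComp {X : Type*} [TopologicalSpace X] (f : ℕ → X ≃ₜ X) : ℕ → X → X
  | 0 => id
  | n + 1 => negComp f n ∘ (f (n + 1)).symm

/-- The time-`n` map `ω_n` of the nonautonomous system generated by `f`. -/
def omegaMap {X : Type*} [TopologicalSpace X] (f : ℕ → X ≃ₜ X) (n : ℤ) : X → X :=
  if 0 ≤ n then posComp f n.toNat else negComp f (-n).toNat

/-- The family is commutative. -/
def Commutes {X : Type*} [TopologicalSpace X] (f : ℕ → X ≃ₜ X) : Prop :=
  ∀ i j, ∀ x : X, f i (f j x) = f j (f i x)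

/-- Orbit `O(x) = {ω_n x : n ∈ ℤ}`. -/
def orbit' {X : Type*} [TopologicalSpace X] (f : ℕ → X ≃ₜ X) (x : X) : Set X :=
  Set.range fun n : ℤ => omegaMap f n x

/-- Orbital hull `O_H(x) = {ω_{k_n} ∘ ⋯ ∘ ω_{k_1} x : k_i ∈ ℤ}`. -/
def orbitalHull {X : Type*} [TopologicalSpace X] (f : ℕ → X ≃ₜ X) (x : X) : Set X :=
  {y | ∃ l : List ℤ, y = l.foldr (fun k z => omegaMap f k z) x}

/-- Truncated orbital hull of order `k`. -/
def truncHull {X : Type*} [TopologicalSpace X] (f : ℕ → X ≃ₜ X) (k : ℕ) (x : X) : Set X :=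
  {y | ∃ l : List ℤ, (∀ r ∈ l, |r| ≤ (k : ℤ)) ∧ y = l.foldr (fun j z => omegaMap f j z) x}

/-- `x` is periodic of period `r`: `ω_{n r} x = x` for all `n ∈ ℤ`. -/
def PeriodicPt {X : Type*} [TopologicalSpace X] (f : ℕ → X ≃ₜ X) (r : ℕ) (x : X) : Prop :=
  ∀ n : ℤ, omegaMap f (n * r) x = x

/-- `Y` is invariant: `ω_k(Y) ⊆ Y` for all `k ∈ ℤ`. -/
def Invariant {X : Type*} [TopologicalSpace X] (f : ℕ → X ≃ₜ X) (Y : Set X) : Prop :=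
  ∀ k : ℤ, omegaMap f k '' Y ⊆ Y

/-- The system is minimal: no proper nonempty closed invariant subset. -/
def MinimalSys {X : Type*} [TopologicalSpace X] (f : ℕ → X ≃ₜ X) : Prop :=
  ∀ Y : Set X, Y.Nonempty → IsClosed Y → Invariant f Y → Y = Set.univ

/-- Equicontinuity of the system. -/
def Equicont {X : Type*} [MetricSpace X] (f : ℕ → X ≃ₜ X) : Prop :=
  ∀ ε > (0 : ℝ), ∃ δ > (0 : ℝ), ∀ a b : X, dist a b < δ →
    ∀ n : ℤ, dist (omegaMap f n a) (omegaMap f n b) < ε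

/-- `S ⊆ ℤ` is `M`-syndetic. -/
def MSyndetic (S : Set ℤ) (M : ℤ) : Prop :=
  ∀ a : ℤ, ∃ n ∈ S, a ≤ n ∧ n < a + M

/-- `x` is almost periodic. -/
def AlmostPeriodicPt {X : Type*} [MetricSpace X] (f : ℕ → X ≃ₜ X) (x : X) : Prop :=
  ∀ ε > (0 : ℝ), ∃ M : ℤ, 0 < M ∧ MSyndetic {n : ℤ | dist (omegaMap f n x) x < ε} M

/-- The system is sensitive at `x`. -/
def SensitiveAt {X : Type*} [MetricSpace X] (f : ℕ → X ≃ₜ X) (x : X) : Prop :=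
  ∃ δ > (0 : ℝ), ∀ U : Set X, IsOpen U → x ∈ U → ∃ m : ℤ, δ < diam (omegaMap f m '' U)

/-- Topological transitivity. -/
def TopTransitive {X : Type*} [TopologicalSpace X] (f : ℕ → X ≃ₜ X) : Prop :=
  ∀ U V : Set X, IsOpen U → IsOpen V → U.Nonempty → V.Nonempty →
    ∃ k : ℤ, ((omegaMap f k '' U) ∩ V).Nonempty

section Aux

variable {X : Type*} [TopologicalSpace X] (f : ℕ → X ≃ₜ X)

lemma comm_symm (hcomm : Commutes f) (i j : ℕ) (x : X) :
    f i ((f j).symm x) = (f j).symm (f i x) := by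
  apply (f j).injective
  rw [(f j).apply_symm_apply, hcomm, (f j).apply_symm_apply]

lemma comm_symm_symm (hcomm : Commutes f) (i j : ℕ) (x : X) :
    (f i).symm ((f j).symm x) = (f j).symm ((f i).symm x) := by
  apply (f i).injective
  rw [(f i).apply_symm_apply, comm_symm f hcomm, (f i).apply_symm_apply]

lemma posComp_comm (hcomm : Commutes f) (i : ℕ) (n : ℕ) (x : X) :
    f i (posComp f n x) = posComp f n (f i x) := by
  induction n with
  | zero => rfl
  | succ n ih =>
    simp only [posComp, Function.comp_apply]
    rw [hcomm, ih]

lemma posComp_comm_symm (hcomm : Commutes f) (i : ℕ) (n : ℕ) (x : X) :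
    (f i).symm (posComp f n x) = posComp f n ((f i).symm x) := by
  induction n with
  | zero => rfl
  | succ n ih => simp only [posComp, Function.comp_apply, ← comm_symm f hcomm, ih]

lemma negComp_comm (hcomm : Commutes f) (i : ℕ) (n : ℕ) (x : X) :
    f i (negComp f n x) = negComp f n (f i x) := by
  induction n generalizing x with
  | zero => rfl
  | succ n ih =>
    simp only [negComp, Function.comp_apply]
    rw [ih, comm_symm f hcomm]

lemma negComp_comm_symm (hcomm : Commutes f) (i : ℕ) (n : ℕ) (x : X) :
    (f i).symm (negComp f n x) = negComp f n ((f i).symm x) := by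
  induction n generalizing x with
  | zero => rfl
  | succ n ih =>
    simp only [negComp, Function.comp_apply]
    rw [ih, comm_symm_symm f hcomm]

lemma omegaMap_comm_f (hcomm : Commutes f) (i : ℕ) (n : ℤ) (x : X) :
    f i (omegaMap f n x) = omegaMap f n (f i x) := by
  unfold omegaMap
  split
  · exact posComp_comm f hcomm i _ x
  · exact negComp_comm f hcomm i _ x

lemma omegaMap_comm_fsymm (hcomm : Commutes f) (i : ℕ) (n : ℤ) (x : X) :
    (f i).symm (omegaMap f n x) = omegaMap f n ((f i).symm x) := by
  unfold omegaMap
  split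
  · exact posComp_comm_symm f hcomm i _ x
  · exact negComp_comm_symm f hcomm i _ x

lemma posComp_omega_comm (hcomm : Commutes f) (m : ℕ) (k : ℤ) (x : X) :
    posComp f m (omegaMap f k x) = omegaMap f k (posComp f m x) := by
  induction m with
  | zero => rfl
  | succ m ih =>
    simp only [posComp, Function.comp_apply, ih, omegaMap_comm_f f hcomm]

lemma negComp_omega_comm (hcomm : Commutes f) (m : ℕ) (k : ℤ) (x : X) :
    negComp f m (omegaMap f k x) = omegaMap f k (negComp f m x) := by
  induction m generalizing x with
  | zero => rfl
  | succ m ih =>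
    simp only [negComp, Function.comp_apply]
    rw [omegaMap_comm_fsymm f hcomm, ih]

lemma omegaMap_comm (hcomm : Commutes f) (n k : ℤ) (x : X) :
    omegaMap f n (omegaMap f k x) = omegaMap f k (omegaMap f n x) := by
  have hn : omegaMap f n =
      (if 0 ≤ n then posComp f n.toNat else negComp f (-n).toNat) := rfl
  by_cases h : 0 ≤ n
  · rw [hn, if_pos h]; exact posComp_omega_comm f hcomm _ k x
  · rw [hn, if_neg h]; exact negComp_omega_comm f hcomm _ k x

lemma posComp_continuous (n : ℕ) : Continuous (posComp f n) := by
  induction n with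
  | zero => exact continuous_id
  | succ n ih => exact (f (n + 1)).continuous.comp ih

lemma negComp_continuous (n : ℕ) : Continuous (negComp f n) := by
  induction n with
  | zero => exact continuous_id
  | succ n ih => exact ih.comp (f (n + 1)).symm.continuous

lemma omegaMap_continuous (n : ℤ) : Continuous (omegaMap f n) := by
  unfold omegaMap
  split
  · exact posComp_continuous f _
  · exact negComp_continuous f _

lemma foldr_comm (hcomm : Commutes f) (l : List ℤ) (n : ℤ) (z : X) :
    omegaMap f n (l.foldr (fun k w => omegaMap f k w) z) =
      l.foldr (fun k w => omegaMap f k w) (omegaMap f n z) := by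
  induction l with
  | nil => rfl
  | cons k l ih =>
    simp only [List.foldr_cons]
    rw [omegaMap_comm f hcomm, ih]

lemma foldr_continuous (l : List ℤ) :
    Continuous (fun z : X => l.foldr (fun k w => omegaMap f k w) z) := by
  induction l with
  | nil => exact continuous_id
  | cons k l ih => exact (omegaMap_continuous f k).comp ih

end Aux

theorem stmt6 {X : Type*} [MetricSpace X] [CompactSpace X] (f : ℕ → X ≃ₜ X)
    (hcomm : Commutes f) (x : X) (hx : AlmostPeriodicPt f x) :
    ∀ y ∈ orbitalHull f x, AlmostPeriodicPt f y := by
  rintro y ⟨l, rfl⟩ ε hε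
  set g : X → X := fun z => l.foldr (fun k w => omegaMap f k w) z with hg
  have hgc : Continuous g := foldr_continuous f l
  have hgu : UniformContinuous g := CompactSpace.uniformContinuous_of_continuous hgc
  rw [Metric.uniformContinuous_iff] at hgu
  obtain ⟨δ, hδ, hδ'⟩ := hgu ε hε
  obtain ⟨M, hM, hMs⟩ := hx δ hδ
  refine ⟨M, hM, fun a => ?_⟩
  obtain ⟨n, hn, hn1, hn2⟩ := hMs a
  refine ⟨n, ?_, hn1, hn2⟩
  have : omegaMap f n (g x) = g (omegaMap f n x) := foldr_comm f hcomm l n x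
  simp only [Set.mem_setOf_eq] at hn ⊢
  rw [this]
  exact hδ' hn
end

section
/- Consider the nonautonomous system on the circle S^1 generated by the rotations f_n(θ) = θ + 2π·Σ_{i=1}^{k} 1/i when n = 2k−1 and f_n(θ) = θ − 2π·Σ_{i=1}^{k} 1/i when n = 2k. Then every point of S^1 is periodic with period 2 (ω_{2n}(θ) = θ for all n ∈ ℤ), the system is equicontinuous, and the orbit of every point is dense in S^1 (hence the system is topologically transitive but not sensitive). -/
open Metric Filter

instance : Fact ((0 : ℝ) < 2 * Real.pi) := ⟨by positivity⟩

/-!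
The rotations `f (2k+1)` and `f (2k+2)` cancel, so `ω_{2k} = id` and `ω_{2k+1}` is the rotation by
`2π H_{k+1}`, `H_n` the `n`-th harmonic number. Thus every `ω_n` is a rotation, hence an isometry,
which gives equicontinuity and rules out sensitivity. Since `H_n → ∞` with steps `1/(n+1) → 0`,
for every `ε > 0` all large reals lie within `ε` of some `H_n`, so the `H_n` are dense modulo `1`;
hence every orbit is dense and the system is transitive.
-/

open Topology

theorem exists_abs_sub_lt_of_tendsto_atTop {s : ℕ → ℝ} (hs : Tendsto s atTop atTop) {ε : ℝ}
    {N : ℕ} (hstep : ∀ n ≥ N, s (n + 1) - s n < ε) {t : ℝ} (ht : s N ≤ t) :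
    ∃ n, |s n - t| < ε := by
  by_contra! hfar
  have hle : ∀ n ≥ N, s n ≤ t := by
    intro n hn
    induction n, hn using Nat.le_induction with
    | base => exact ht
    | succ n hn ih =>
      by_contra! hgt
      have hgap := hfar n
      rw [abs_of_nonpos (by linarith)] at hgap
      linarith [hstep n hn]
  obtain ⟨n, hnt, hnN⟩ := ((hs.eventually_gt_atTop t).and (eventually_ge_atTop N)).exists
  linarith [hle n hnN]

namespace AddCircle

theorem denseRange_coe_of_tendsto_atTop {p : ℝ} [hp : Fact (0 < p)] {s : ℕ → ℝ}
    (hs : Tendsto s atTop atTop) (hstep : Tendsto (fun n => s (n + 1) - s n) atTop (𝓝 0)) :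
    DenseRange fun n => (s n : AddCircle p) := by
  rw [Metric.denseRange_iff]
  intro x ε hε
  obtain ⟨N, hN⟩ := eventually_atTop.1 (hstep.eventually (gt_mem_nhds hε))
  induction x using QuotientAddGroup.induction_on with | H t => ?_
  have hlift : ((toIcoMod hp.out (s N) t : ℝ) : AddCircle p) = t := by
    rw [← self_sub_toIcoDiv_zsmul, coe_sub, coe_zsmul, coe_period, smul_zero, sub_zero]
  obtain ⟨n, hn⟩ := exists_abs_sub_lt_of_tendsto_atTop hs hN (left_le_toIcoMod hp.out (s N) t)
  refine ⟨n, ?_⟩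
  calc dist (t : AddCircle p) (s n) = ‖((s n - toIcoMod hp.out (s N) t : ℝ) : AddCircle p)‖ := by
        rw [dist_comm, dist_eq_norm, coe_sub, hlift]
    _ ≤ |s n - toIcoMod hp.out (s N) t| := QuotientAddGroup.norm_mk_le_norm
    _ < ε := hn

theorem denseRange_harmonic {p : ℝ} [hp : Fact (0 < p)] :
    DenseRange fun k : ℕ =>
      ((p * ∑ i ∈ Finset.range (k + 1), (1 : ℝ) / (i + 1) : ℝ) : AddCircle p) := by
  refine denseRange_coe_of_tendsto_atTop ?_ ?_
  · exact ((Real.tendsto_sum_range_one_div_nat_succ_atTop.comp (tendsto_add_atTop_nat 1))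
      ).const_mul_atTop hp.out
  · have hinc : Tendsto (fun k : ℕ => p * (1 / ((k + 1 : ℕ) + 1 : ℝ))) atTop (𝓝 0) := by
      simpa using (tendsto_one_div_add_atTop_nhds_zero_nat.comp
        (tendsto_add_atTop_nat 1)).const_mul p
    refine hinc.congr fun k => ?_
    rw [Finset.sum_range_succ _ (k + 1)]
    ring

end AddCircle

section NonautonomousSystem

variable {X : Type*} [TopologicalSpace X] (f : ℕ → X ≃ₜ X)

theorem negComp_posComp (n : ℕ) (x : X) : negComp f n (posComp f n x) = x := by
  induction n generalizing x with
  | zero => rfl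
  | succ n ih => simp [posComp, negComp, ih]

theorem omegaMap_natCast (n : ℕ) : omegaMap f n = posComp f n := by
  simp [omegaMap]

theorem omegaMap_neg_natCast (n : ℕ) : omegaMap f (-n) = negComp f n := by
  rcases n with _ | n
  · rfl
  · have hneg : ¬ (0 : ℤ) ≤ -((n + 1 : ℕ) : ℤ) := by omega
    simp only [omegaMap, if_neg hneg, neg_neg, Int.toNat_natCast]

theorem topTransitive_of_dense_orbit (h : ∀ x, Dense (orbit' f x)) : TopTransitive f := by
  intro U V _ hV ⟨x, hx⟩ hVne
  obtain ⟨y, ⟨n, rfl⟩, hyV⟩ := (h x).exists_mem_open hV hVne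
  exact ⟨n, _, ⟨x, hx, rfl⟩, hyV⟩

end NonautonomousSystem

section Isometric

variable {X : Type*} [MetricSpace X] {f : ℕ → X ≃ₜ X}

theorem equicont_of_isometry (h : ∀ n, Isometry (omegaMap f n)) : Equicont f :=
  fun ε hε => ⟨ε, hε, fun a b hab n => by rwa [(h n).dist_eq]⟩

theorem not_sensitiveAt_of_isometry (h : ∀ n, Isometry (omegaMap f n)) (x : X) :
    ¬ SensitiveAt f x := by
  rintro ⟨δ, hδ, hsens⟩
  obtain ⟨m, hm⟩ :=
    hsens (Metric.ball x (δ / 4)) Metric.isOpen_ball (Metric.mem_ball_self (by positivity))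
  rw [(h m).diam_image] at hm
  linarith [Metric.diam_ball (x := x) (by positivity : (0 : ℝ) ≤ δ / 4)]

end Isometric

section AlternatingTranslations

variable {G : Type*} [AddGroup G] [TopologicalSpace G] {f : ℕ → G ≃ₜ G} {c : ℕ → G}

theorem posComp_two_mul (hodd : ∀ k x, f (2 * k + 1) x = x + c k)
    (heven : ∀ k x, f (2 * k + 2) x = x - c k) (k : ℕ) (x : G) : posComp f (2 * k) x = x := by
  induction k with
  | zero => rfl
  | succ k ih =>
    change f (2 * k + 2) (f (2 * k + 1) (posComp f (2 * k) x)) = x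
    rw [ih, hodd, heven, add_sub_cancel_right]

theorem posComp_two_mul_add_one (hodd : ∀ k x, f (2 * k + 1) x = x + c k)
    (heven : ∀ k x, f (2 * k + 2) x = x - c k) (k : ℕ) (x : G) :
    posComp f (2 * k + 1) x = x + c k := by
  change f (2 * k + 1) (posComp f (2 * k) x) = x + c k
  rw [posComp_two_mul hodd heven, hodd]

theorem negComp_two_mul (hodd : ∀ k x, f (2 * k + 1) x = x + c k)
    (heven : ∀ k x, f (2 * k + 2) x = x - c k) (k : ℕ) (x : G) : negComp f (2 * k) x = x := by
  simpa only [posComp_two_mul hodd heven] using negComp_posComp f (2 * k) x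

theorem negComp_two_mul_add_one (hodd : ∀ k x, f (2 * k + 1) x = x + c k)
    (heven : ∀ k x, f (2 * k + 2) x = x - c k) (k : ℕ) (x : G) :
    negComp f (2 * k + 1) x = x - c k := by
  simpa only [posComp_two_mul_add_one hodd heven, sub_add_cancel] using
    negComp_posComp f (2 * k + 1) (x - c k)

theorem omegaMap_two_mul (hodd : ∀ k x, f (2 * k + 1) x = x + c k)
    (heven : ∀ k x, f (2 * k + 2) x = x - c k) (x : G) (n : ℤ) : omegaMap f (2 * n) x = x := by
  obtain ⟨m, rfl | rfl⟩ := Int.eq_nat_or_neg n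
  · rw [show 2 * (m : ℤ) = ((2 * m : ℕ) : ℤ) by push_cast; ring, omegaMap_natCast,
      posComp_two_mul hodd heven]
  · rw [show 2 * -(m : ℤ) = -((2 * m : ℕ) : ℤ) by push_cast; ring, omegaMap_neg_natCast,
      negComp_two_mul hodd heven]

theorem omegaMap_two_mul_add_one (hodd : ∀ k x, f (2 * k + 1) x = x + c k)
    (heven : ∀ k x, f (2 * k + 2) x = x - c k) (k : ℕ) (x : G) :
    omegaMap f (2 * k + 1) x = x + c k := by
  rw [show 2 * (k : ℤ) + 1 = ((2 * k + 1 : ℕ) : ℤ) by push_cast; ring, omegaMap_natCast,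
    posComp_two_mul_add_one hodd heven]

theorem exists_omegaMap_eq_add_right (hodd : ∀ k x, f (2 * k + 1) x = x + c k)
    (heven : ∀ k x, f (2 * k + 2) x = x - c k) (n : ℤ) :
    ∃ d, omegaMap f n = (· + d) := by
  obtain ⟨m, rfl | rfl⟩ := Int.eq_nat_or_neg n
  · rw [omegaMap_natCast]
    obtain ⟨k, rfl | rfl⟩ := Nat.even_or_odd' m
    · exact ⟨0, funext fun x => by rw [posComp_two_mul hodd heven, add_zero]⟩
    · exact ⟨c k, funext (posComp_two_mul_add_one hodd heven k)⟩
  · rw [omegaMap_neg_natCast]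
    obtain ⟨k, rfl | rfl⟩ := Nat.even_or_odd' m
    · exact ⟨0, funext fun x => by rw [negComp_two_mul hodd heven, add_zero]⟩
    · exact ⟨-c k, funext fun x => by rw [negComp_two_mul_add_one hodd heven, sub_eq_add_neg]⟩

theorem dense_orbit'_of_denseRange [ContinuousAdd G] (hodd : ∀ k x, f (2 * k + 1) x = x + c k)
    (heven : ∀ k x, f (2 * k + 2) x = x - c k) (hc : DenseRange c) (x : G) :
    Dense (orbit' f x) := by
  refine Dense.mono ?_ ((add_left_surjective x).denseRange.comp hc (continuous_const_add x))
  rintro _ ⟨k, rfl⟩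
  exact ⟨2 * k + 1, omegaMap_two_mul_add_one hodd heven k x⟩

end AlternatingTranslations

theorem stmt18 (f : ℕ → AddCircle (2 * Real.pi) ≃ₜ AddCircle (2 * Real.pi))
    (hodd : ∀ (k : ℕ) (x : AddCircle (2 * Real.pi)),
      f (2 * k + 1) x = x + ((2 * Real.pi * ∑ i ∈ Finset.range (k + 1), (1 : ℝ) / (i + 1) : ℝ) :
        AddCircle (2 * Real.pi)))
    (heven : ∀ (k : ℕ) (x : AddCircle (2 * Real.pi)),
      f (2 * k + 2) x = x - ((2 * Real.pi * ∑ i ∈ Finset.range (k + 1), (1 : ℝ) / (i + 1) : ℝ) :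
        AddCircle (2 * Real.pi))) :
    (∀ (x : AddCircle (2 * Real.pi)) (n : ℤ), omegaMap f (2 * n) x = x) ∧
    Equicont f ∧
    (∀ x : AddCircle (2 * Real.pi), Dense (orbit' f x)) ∧
    TopTransitive f ∧
    ¬ (∃ δ > (0 : ℝ), ∀ (x : AddCircle (2 * Real.pi)) (U : Set (AddCircle (2 * Real.pi))),
        IsOpen U → x ∈ U → ∃ m : ℤ, δ < diam (omegaMap f m '' U)) := by
  have hiso : ∀ n, Isometry (omegaMap f n) := fun n => by
    obtain ⟨d, hd⟩ := exists_omegaMap_eq_add_right hodd heven n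
    exact hd ▸ isometry_add_right d
  have hdense : ∀ x, Dense (orbit' f x) :=
    dense_orbit'_of_denseRange hodd heven AddCircle.denseRange_harmonic
  exact ⟨omegaMap_two_mul hodd heven, equicont_of_isometry hiso, hdense,
    topTransitive_of_dense_orbit f hdense,
    fun ⟨δ, hδ, h⟩ => not_sensitiveAt_of_isometry hiso 0 ⟨δ, hδ, h 0⟩⟩
end
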